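/- arXiv:2504.04614 — 6 statements merged into one kernel-verified Lean document; each statement's English description precedes it below -/
import Mathlib

section
/- Let a, x, y, t, q be rational numbers with q ≠ 0 and t ≠ 0. Set p = q·t·y, s = q·x, r = q·t, and then A = p + q, C = p − q, D = r + s, B = r − s. Then A⁴ + a·B⁴ = C⁴ + a·D⁴ holds if and only if a·x³ − y = t²·(y³ − a·x). -/
theorem quartic_sub_eq_of_substitution {R : Type*} [CommRing R] (a x y t q : R) :
    (q * t * y - q) ^ 4 + a * (q * t + q * x) ^ 4 - ((q * t * y + q) ^ 4 + a * (q * t - q * x) ^ 4) =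
      8 * q ^ 4 * t * (a * x ^ 3 - y - t ^ 2 * (y ^ 3 - a * x)) := by
  ring

theorem stmt_0 (a x y t q : ℚ) (hq : q ≠ 0) (ht : t ≠ 0)
    (p s r A C D B : ℚ)
    (hp : p = q * t * y) (hs : s = q * x) (hr : r = q * t)
    (hA : A = p + q) (hC : C = p - q) (hD : D = r + s) (hB : B = r - s) :
    A ^ 4 + a * B ^ 4 = C ^ 4 + a * D ^ 4 ↔
      a * x ^ 3 - y = t ^ 2 * (y ^ 3 - a * x) := by
  subst hp hs hr hA hC hD hB
  rw [eq_comm, ← sub_eq_zero, quartic_sub_eq_of_substitution, mul_eq_zero, sub_eq_zero]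
  simp [hq, ht]
end

section
/- Let a, ρ, t, ω be rational numbers with ω ≠ 0 and a·t⁴ ≠ 1, and set x = (t² + ρ)/ω and y = (a·ρ·t² + 1)/ω. Then a·x³ − y = t²·(y³ − a·x) holds if and only if a²·ρ³·t⁴ + (3a·ρ² − 1)·t² + a·ρ³ = ω². -/
/-! Substituting `x = (t² + ρ)/ω`, `y = (aρt² + 1)/ω`, the difference of the two sides of (A)
factors as `(1 - a t⁴)(a²ρ³t⁴ + (3aρ² - 1)t² + aρ³ - ω²) / ω³`; the first factor is nonzero by
hypothesis, so (A) holds exactly when (B) does. -/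

theorem sub_eq_mul_sub_div_of_substitution {K : Type*} [Field K] (a ρ t ω : K) (hω : ω ≠ 0) :
    a * ((t ^ 2 + ρ) / ω) ^ 3 - (a * ρ * t ^ 2 + 1) / ω
        - t ^ 2 * (((a * ρ * t ^ 2 + 1) / ω) ^ 3 - a * ((t ^ 2 + ρ) / ω)) =
      (1 - a * t ^ 4) *
        (a ^ 2 * ρ ^ 3 * t ^ 4 + (3 * a * ρ ^ 2 - 1) * t ^ 2 + a * ρ ^ 3 - ω ^ 2) / ω ^ 3 := by
  field_simp
  ring

theorem stmt_4 (a ρ t ω : ℚ) (hω : ω ≠ 0) (ha : a * t ^ 4 ≠ 1)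
    (x y : ℚ) (hx : x = (t ^ 2 + ρ) / ω) (hy : y = (a * ρ * t ^ 2 + 1) / ω) :
    a * x ^ 3 - y = t ^ 2 * (y ^ 3 - a * x) ↔
      a ^ 2 * ρ ^ 3 * t ^ 4 + (3 * a * ρ ^ 2 - 1) * t ^ 2 + a * ρ ^ 3 = ω ^ 2 := by
  subst hx hy
  have h_factor : 1 - a * t ^ 4 ≠ 0 := sub_ne_zero.mpr ha.symm
  rw [← sub_eq_zero, sub_eq_mul_sub_div_of_substitution a ρ t ω hω,
    div_eq_zero_iff, or_iff_left (pow_ne_zero 3 hω), mul_eq_zero, or_iff_right h_factor,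
    sub_eq_zero]
end

section
/- Let u, v be rational numbers with (u + v)·(u·v − 1) ≠ 0, and set a = ((u − v)·(u·v + 1))/((u + v)·(u·v − 1)), p = u·v + 1, q = u − v, r = u·v − 1, s = u + v. Then (p + q)⁴ + a·(r − s)⁴ = (p − q)⁴ + a·(r + s)⁴. -/
/-! Since `(p + q)⁴ - (p - q)⁴ = 8pq(p² + q²)` and `(r + s)⁴ - (r - s)⁴ = 8rs(r² + s²)`, the
quadruple `(p + q, r - s, p - q, r + s)` solves `A⁴ + aB⁴ = C⁴ + aD⁴` as soon as
`p² + q² = r² + s²` and `a·rs = pq`. The choice `p = uv + 1, q = u - v, r = uv - 1, s = u + v`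
makes both sums of squares equal to `(u² + 1)(v² + 1)`, and `a` is defined as `pq / rs`. -/

theorem add_pow_four_sub_sub_pow_four {R : Type*} [CommRing R] (x y : R) :
    (x + y) ^ 4 - (x - y) ^ 4 = 8 * (x * y) * (x ^ 2 + y ^ 2) := by
  ring

theorem quartic_eq_of_sq_add_sq_eq {R : Type*} [CommRing R] {a p q r s : R}
    (hsq : p ^ 2 + q ^ 2 = r ^ 2 + s ^ 2) (ha : a * (r * s) = p * q) :
    (p + q) ^ 4 + a * (r - s) ^ 4 = (p - q) ^ 4 + a * (r + s) ^ 4 := by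
  have hpq := add_pow_four_sub_sub_pow_four p q
  have hrs := add_pow_four_sub_sub_pow_four r s
  linear_combination hpq - a * hrs + 8 * (p * q) * hsq - 8 * (r ^ 2 + s ^ 2) * ha

theorem stmt_7 (u v : ℚ) (h : (u + v) * (u * v - 1) ≠ 0)
    (a p q r s : ℚ)
    (ha : a = ((u - v) * (u * v + 1)) / ((u + v) * (u * v - 1)))
    (hp : p = u * v + 1) (hq : q = u - v) (hr : r = u * v - 1) (hs : s = u + v) :
    (p + q) ^ 4 + a * (r - s) ^ 4 = (p - q) ^ 4 + a * (r + s) ^ 4 := by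
  subst hp hq hr hs
  apply quartic_eq_of_sq_add_sq_eq
  · ring
  · rw [ha, mul_comm (u * v - 1), div_mul_cancel₀ _ h]
    ring
end

section
/- For every rational number u, setting a = u² − 1, p = u·(u⁴ − 1), q = 2u² − 1, r = u⁴ − u² + 1, s = u·(2u² − 1), one has (p + q)⁴ + a·(r − s)⁴ = (p − q)⁴ + a·(r + s)⁴. -/
theorem stmt_11 (u : ℚ) (a p q r s : ℚ)
    (ha : a = u ^ 2 - 1) (hp : p = u * (u ^ 4 - 1)) (hq : q = 2 * u ^ 2 - 1)
    (hr : r = u ^ 4 - u ^ 2 + 1) (hs : s = u * (2 * u ^ 2 - 1)) :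
    (p + q) ^ 4 + a * (r - s) ^ 4 = (p - q) ^ 4 + a * (r + s) ^ 4 := by
  subst ha hp hq hr hs
  ring
end

section
/- For every rational number u, setting a = u² + 2, p = u·(u² + 2), q = 1, r = u² + 1, s = u, one has (p + q)⁴ + a·(r − s)⁴ = (p − q)⁴ + a·(r + s)⁴. -/
theorem stmt_12 (u : ℚ) (a p q r s : ℚ)
    (ha : a = u ^ 2 + 2) (hp : p = u * (u ^ 2 + 2)) (hq : q = 1)
    (hr : r = u ^ 2 + 1) (hs : s = u) :
    (p + q) ^ 4 + a * (r - s) ^ 4 = (p - q) ^ 4 + a * (r + s) ^ 4 := by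
  subst ha hp hq hr hs
  ring
end

section
/- For every rational number u, setting a = u² + 2, p = u·(u² + 1), q = 3·(u² + 2), r = u·(u² + 4), s = 3, one has (p + q)⁴ + a·(r − s)⁴ = (p − q)⁴ + a·(r + s)⁴. -/
/-! Since `(x + y)⁴ - (x - y)⁴ = 8xy(x² + y²)`, the identity reduces to
`pq(p² + q²) = a·rs(r² + s²)`. For the given parametrization both sides equal
`3u(u² + 2)(u⁸ + 12u⁶ + 48u⁴ + 73u² + 36)`. -/

theorem add_pow_four_add_mul_sub_pow_four_of_mul_eq {R : Type*} [CommRing R] {a p q r s : R}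
    (h : p * q * (p ^ 2 + q ^ 2) = a * (r * s * (r ^ 2 + s ^ 2))) :
    (p + q) ^ 4 + a * (r - s) ^ 4 = (p - q) ^ 4 + a * (r + s) ^ 4 := by
  linear_combination 8 * h

theorem stmt_13 (u : ℚ) (a p q r s : ℚ)
    (ha : a = u ^ 2 + 2) (hp : p = u * (u ^ 2 + 1)) (hq : q = 3 * (u ^ 2 + 2))
    (hr : r = u * (u ^ 2 + 4)) (hs : s = 3) :
    (p + q) ^ 4 + a * (r - s) ^ 4 = (p - q) ^ 4 + a * (r + s) ^ 4 := by
  subst ha hp hq hr hs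
  exact add_pow_four_add_mul_sub_pow_four_of_mul_eq (by ring)
end
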